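/- arXiv:2004.00076 — 4 statements merged into one kernel-verified Lean document; each statement's English description precedes it below -/
import Mathlib

section
/- (Orthogonality of Ramanujan sums) For distinct positive integers p and q, and any integer l, \sum_{n=0}^{L-1} c_p(n) c_q(n - l) = 0, where L = lcm(p, q). -/
/-!
Write `c_p(n) = ∑_a a^n` over the primitive `p`-th roots of unity `a`, and likewise for `c_q`.
Expanding the product, each pair `(a, b)` contributes `b^{-l} ∑_{n < lcm(p,q)} (ab)^n`. Here
`(ab)^{lcm(p,q)} = 1`, while `ab ≠ 1` because otherwise `a = b⁻¹` would be a primitive root of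
order both `p` and `q`; so every such geometric sum vanishes.
-/

/-- The Ramanujan sum `c_p(n) = ∑_{1 ≤ k ≤ p, gcd(k,p)=1} e^{2πikn/p}`. -/
noncomputable def ramanujanSum (p : ℕ) (n : ℤ) : ℂ :=
  ∑ k ∈ (Finset.Icc 1 p).filter (fun k => Nat.gcd k p = 1),
    Complex.exp (2 * (Real.pi : ℂ) * Complex.I * (k : ℂ) * (n : ℂ) / (p : ℂ))

open Complex Finset
open scoped Real

theorem IsPrimitiveRoot.mul_ne_one_of_ne {M : Type*} [DivisionCommMonoid M] {a b : M} {p q : ℕ}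
    (ha : IsPrimitiveRoot a p) (hb : IsPrimitiveRoot b q) (hpq : p ≠ q) : a * b ≠ 1 := fun h =>
  hpq (ha.unique (eq_inv_of_mul_eq_one_left h ▸ hb.inv))

theorem sum_range_pow_eq_zero_of_pow_eq_one {K : Type*} [DivisionRing K] {x : K} {L : ℕ}
    (hL : x ^ L = 1) (hx : x ≠ 1) : ∑ n ∈ range L, x ^ n = 0 := by
  rw [geom_sum_eq hx, hL, sub_self, zero_div]

theorem IsPrimitiveRoot.sum_range_lcm_zpow_mul_zpow_sub_eq_zero {K : Type*} [Field K] {a b : K}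
    {p q : ℕ} (ha : IsPrimitiveRoot a p) (hb : IsPrimitiveRoot b q) (hpq : p ≠ q) (l : ℤ) :
    ∑ n ∈ range (p.lcm q), a ^ (n : ℤ) * b ^ ((n : ℤ) - l) = 0 := by
  rcases eq_or_ne q 0 with rfl | hq
  · simp
  have hL : (a * b) ^ p.lcm q = 1 := by
    rw [mul_pow, (ha.pow_eq_one_iff_dvd _).mpr (p.dvd_lcm_left q),
      (hb.pow_eq_one_iff_dvd _).mpr (p.dvd_lcm_right q), one_mul]
  calc ∑ n ∈ range (p.lcm q), a ^ (n : ℤ) * b ^ ((n : ℤ) - l)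
      = (∑ n ∈ range (p.lcm q), (a * b) ^ n) * b ^ (-l) := by
        rw [sum_mul]
        refine sum_congr rfl fun n _ => ?_
        rw [zpow_sub₀ (hb.ne_zero hq), zpow_neg, zpow_natCast, zpow_natCast, mul_pow,
          div_eq_mul_inv, mul_assoc]
    _ = 0 := by rw [sum_range_pow_eq_zero_of_pow_eq_one hL (ha.mul_ne_one_of_ne hb hpq), zero_mul]

theorem ramanujanSum_eq_sum_zpow (p : ℕ) (n : ℤ) :
    ramanujanSum p n = ∑ k ∈ (Icc 1 p).filter (fun k => Nat.gcd k p = 1),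
      exp (2 * π * I * (k / p)) ^ n := by
  refine sum_congr rfl fun k _ => ?_
  rw [← exp_int_mul]
  ring_nf

/-- Orthogonality of Ramanujan sums: for distinct positive integers `p ≠ q` and any
integer `l`, `∑_{n=0}^{lcm(p,q)-1} c_p(n) c_q(n-l) = 0`. -/
theorem ramanujanSum_orthogonality (p q : ℕ) (hp : 0 < p) (hq : 0 < q) (hpq : p ≠ q)
    (l : ℤ) :
    ∑ n ∈ Finset.range (Nat.lcm p q),
      ramanujanSum p (n : ℤ) * ramanujanSum q ((n : ℤ) - l) = 0 := by
  simp_rw [ramanujanSum_eq_sum_zpow, sum_mul_sum]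
  rw [sum_comm]
  refine sum_eq_zero fun k hk => ?_
  rw [sum_comm]
  refine sum_eq_zero fun m hm => ?_
  have ha := isPrimitiveRoot_exp_of_coprime k p hp.ne' (mem_filter.mp hk).2
  have hb := isPrimitiveRoot_exp_of_coprime m q hq.ne' (mem_filter.mp hm).2
  exact ha.sum_range_lcm_zpow_mul_zpow_sub_eq_zero hb hpq l
end

section
/- The column space of the p \times p circulant matrix B_p (with entries c_p(i - j)) equals the span of the \phi(p) Fourier columns (1, \omega_p^{k}, \omega_p^{2k}, \dots, \omega_p^{(p-1)k})^T over all k with 1 \le k \le p and \gcd(k,p) = 1, where \omega_p = e^{-2\pi i / p}. -/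
/-- The `p × p` circulant matrix with `(i,j)` entry `c_p(i - j)`. -/
noncomputable def ramanujanMatrix (p : ℕ) : Matrix (Fin p) (Fin p) ℂ :=
  fun i j => ramanujanSum p ((i : ℤ) - (j : ℤ))

/-- Indices `k` with `1 ≤ k ≤ p` and `gcd(k,p) = 1`, encoded via `k = k'.1 + 1`
for `k' : Fin p`; there are `φ(p)` of them. -/
def coprimeIndex (p : ℕ) : Type := {k : Fin p // Nat.gcd (k.1 + 1) p = 1}

instance (p : ℕ) : Fintype (coprimeIndex p) := by unfold coprimeIndex; infer_instance

/-- The `p × φ(p)` matrix whose columns are the Fourier vectors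
`(1, ω_p^k, ω_p^{2k}, …, ω_p^{(p-1)k})ᵀ`, over all `k` with `1 ≤ k ≤ p`,
`gcd(k,p) = 1`, where `ω_p = e^{-2πi/p}`. -/
noncomputable def fourierCoprimeMatrix (p : ℕ) : Matrix (Fin p) (coprimeIndex p) ℂ :=
  fun i k => Complex.exp (-(2 * (Real.pi : ℂ) * Complex.I) / (p : ℂ)) ^ ((i : ℕ) * (k.1.1 + 1))

open Finset

section FourierVec

variable {K : Type*} [Field K] {p : ℕ} {ζ : K}

def fourierVec (ζ : K) (p : ℕ) (n : ℤ) : Fin p → K := fun i => ζ ^ (n * i)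

def fourierSumMatrix {ι : Type*} [Fintype ι] (ζ : K) (p : ℕ) (κ : ι → ℤ) :
    Matrix (Fin p) (Fin p) K :=
  Matrix.of fun i j => ∑ a, ζ ^ (κ a * ((i : ℤ) - j))

theorem IsPrimitiveRoot.sum_fin_zpow_mul (hζ : IsPrimitiveRoot ζ p) (n : ℤ) :
    ∑ j : Fin p, ζ ^ (n * j) = if (p : ℤ) ∣ n then (p : K) else 0 := by
  have hpow : ∀ j : ℕ, ζ ^ (n * j) = (ζ ^ n) ^ j := fun j => by
    rw [zpow_mul, zpow_natCast]
  simp only [hpow]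
  rw [Fin.sum_univ_eq_sum_range (fun j => (ζ ^ n) ^ j)]
  split_ifs with h
  · simp [(hζ.zpow_eq_one_iff_dvd n).2 h]
  · have hζn : (ζ ^ n) ^ p = 1 := by
      rw [← zpow_natCast, ← zpow_mul, mul_comm, zpow_mul, zpow_natCast, hζ.pow_eq_one, one_zpow]
    rw [geom_sum_eq (mt (hζ.zpow_eq_one_iff_dvd n).1 h), hζn, sub_self, zero_div]

variable [NeZero p]

theorem IsPrimitiveRoot.fourierVec_eq_of_dvd_sub (hζ : IsPrimitiveRoot ζ p) {a b : ℤ}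
    (h : (p : ℤ) ∣ a - b) : fourierVec ζ p a = fourierVec ζ p b := by
  funext i
  rw [fourierVec, fourierVec, ← sub_add_cancel (a * i) (b * i),
    zpow_add₀ (hζ.ne_zero (NeZero.ne p)),
    (hζ.zpow_eq_one_iff_dvd _).2 (by rw [← sub_mul]; exact h.mul_right _), one_mul]

variable {ι : Type*} [Fintype ι]

theorem fourierSumMatrix_col_eq_sum (hζ : IsPrimitiveRoot ζ p) (κ : ι → ℤ) (j : Fin p) :
    (fourierSumMatrix ζ p κ).transpose j = ∑ a, ζ ^ (-(κ a * j)) • fourierVec ζ p (κ a) := by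
  ext i
  simp only [Matrix.transpose_apply, fourierSumMatrix, Matrix.of_apply, Finset.sum_apply,
    Pi.smul_apply, smul_eq_mul, fourierVec]
  refine Finset.sum_congr rfl fun a _ => ?_
  rw [← zpow_add₀ (hζ.ne_zero (NeZero.ne p))]
  ring_nf

theorem fourierVec_eq_sum_fourierSumMatrix_col (hζ : IsPrimitiveRoot ζ p) (κ : ι → ℤ)
    (hκ : ∀ a b, (p : ℤ) ∣ κ a - κ b → a = b) (a : ι) :
    fourierVec ζ p (κ a)
      = (p : K)⁻¹ • ∑ j : Fin p, ζ ^ (κ a * j) • (fourierSumMatrix ζ p κ).transpose j := by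
  have hζ0 := hζ.ne_zero (NeZero.ne p)
  have hp : (p : K) ≠ 0 := hζ.neZero'.out
  ext i
  have hswap : ∑ j : Fin p, ζ ^ (κ a * j) * ∑ b, ζ ^ (κ b * ((i : ℤ) - j))
      = ∑ b, ζ ^ (κ b * i) * ∑ j : Fin p, ζ ^ ((κ a - κ b) * j) := by
    simp only [Finset.mul_sum]
    rw [Finset.sum_comm]
    refine Finset.sum_congr rfl fun b _ => Finset.sum_congr rfl fun j _ => ?_
    rw [← zpow_add₀ hζ0, ← zpow_add₀ hζ0]
    ring_nf
  simp only [Pi.smul_apply, Finset.sum_apply, smul_eq_mul, Matrix.transpose_apply,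
    fourierSumMatrix, Matrix.of_apply, hswap, hζ.sum_fin_zpow_mul, fourierVec]
  rw [Finset.sum_eq_single a
    (fun b _ hb => by rw [if_neg (fun h => hb (hκ a b h).symm), mul_zero])
    (fun ha => absurd (Finset.mem_univ a) ha), if_pos (by simp)]
  field_simp

theorem span_range_fourierSumMatrix_transpose (hζ : IsPrimitiveRoot ζ p) (κ : ι → ℤ)
    (hκ : ∀ a b, (p : ℤ) ∣ κ a - κ b → a = b) :
    Submodule.span K (Set.range (fourierSumMatrix ζ p κ).transpose)
      = Submodule.span K (Set.range fun a => fourierVec ζ p (κ a)) := by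
  apply le_antisymm <;> refine Submodule.span_le.2 (Set.range_subset_iff.2 fun x => ?_)
  · rw [fourierSumMatrix_col_eq_sum hζ]
    exact Submodule.sum_mem _ fun a _ => Submodule.smul_mem _ _ (Submodule.subset_span ⟨a, rfl⟩)
  · rw [fourierVec_eq_sum_fourierSumMatrix_col hζ κ hκ]
    exact Submodule.smul_mem _ _ (Submodule.sum_mem _ fun j _ =>
      Submodule.smul_mem _ _ (Submodule.subset_span ⟨j, rfl⟩))

end FourierVec

section Ramanujan

variable {p : ℕ}

def coprimeIndex.toNat (k : coprimeIndex p) : ℕ := k.1.1 + 1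

theorem coprimeIndex.ext_of_dvd_sub {k m : coprimeIndex p} (h : (p : ℤ) ∣ k.toNat - m.toNat) :
    k = m := by
  have hk := k.1.isLt
  have hm := m.1.isLt
  have := Int.eq_zero_of_abs_lt_dvd h (by simp only [coprimeIndex.toNat, abs_lt]; omega)
  exact Subtype.ext (Fin.ext (by simp only [coprimeIndex.toNat] at this; omega))

theorem coprimeIndex.exists_dvd_add (k : coprimeIndex p) :
    ∃ m : coprimeIndex p, (p : ℤ) ∣ k.toNat + m.toNat := by
  have hk := k.1.isLt
  have hcop : Nat.gcd k.toNat p = 1 := k.2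
  by_cases h : k.toNat = p
  · rw [h, Nat.gcd_self] at hcop
    exact ⟨k, by simp [hcop]⟩
  · have hlt : k.1.1 + 1 < p := by unfold coprimeIndex.toNat at h; omega
    refine ⟨⟨⟨p - (k.1.1 + 2), by omega⟩, ?_⟩, ⟨1, ?_⟩⟩
    · rw [show p - (k.1.1 + 2) + 1 = p - (k.1.1 + 1) by omega, Nat.gcd_self_sub_left hlt.le]
      exact k.2
    · simp only [coprimeIndex.toNat]
      omega

theorem sum_filter_coprime_eq_sum_coprimeIndex {M : Type*} [AddCommMonoid M] (f : ℕ → M) :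
    ∑ k ∈ (Icc 1 p).filter (fun k => Nat.gcd k p = 1), f k
      = ∑ k : coprimeIndex p, f k.toNat := by
  let e : coprimeIndex p ↪ ℕ := ⟨coprimeIndex.toNat, fun k m h =>
    Subtype.ext (Fin.ext (by simpa [coprimeIndex.toNat] using h))⟩
  refine Eq.trans ?_ (Finset.sum_map univ e f)
  congr 1
  ext n
  simp only [mem_filter, mem_Icc, mem_map, mem_univ, true_and]
  constructor
  · rintro ⟨⟨hn1, hnp⟩, hgcd⟩
    exact ⟨⟨⟨n - 1, by omega⟩, by rwa [Nat.sub_add_cancel hn1]⟩, Nat.sub_add_cancel hn1⟩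
  · rintro ⟨k, rfl⟩
    exact ⟨⟨Nat.le_add_left 1 _, k.1.isLt⟩, k.2⟩

noncomputable def fourierRoot (p : ℕ) : ℂ :=
  Complex.exp (-(2 * (Real.pi : ℂ) * Complex.I) / (p : ℂ))

theorem isPrimitiveRoot_fourierRoot (hp : p ≠ 0) : IsPrimitiveRoot (fourierRoot p) p := by
  rw [fourierRoot, neg_div, Complex.exp_neg]
  exact (Complex.isPrimitiveRoot_exp p hp).inv

theorem ramanujanSum_eq_sum_zpow_s7 (n : ℤ) :
    ramanujanSum p n = ∑ k : coprimeIndex p, fourierRoot p ^ (-(k.toNat : ℤ) * n) := by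
  rw [ramanujanSum, sum_filter_coprime_eq_sum_coprimeIndex]
  refine sum_congr rfl fun k _ => ?_
  rw [fourierRoot, ← Complex.exp_int_mul]
  congr 1
  push_cast
  ring

theorem ramanujanMatrix_eq_fourierSumMatrix :
    ramanujanMatrix p
      = fourierSumMatrix (fourierRoot p) p (fun k : coprimeIndex p => -(k.toNat : ℤ)) := by
  ext i j
  exact ramanujanSum_eq_sum_zpow_s7 _

theorem fourierCoprimeMatrix_col_eq_fourierVec (k : coprimeIndex p) :
    (fun i => fourierCoprimeMatrix p i k) = fourierVec (fourierRoot p) p k.toNat := by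
  ext i
  show fourierRoot p ^ ((i : ℕ) * (k.1.1 + 1)) = fourierRoot p ^ (((k.1.1 + 1 : ℕ) : ℤ) * (i : ℕ))
  rw [← Nat.cast_mul, zpow_natCast, mul_comm]

theorem range_fourierVec_neg_coprimeIndex [NeZero p] :
    Set.range (fun k : coprimeIndex p => fourierVec (fourierRoot p) p (-(k.toNat : ℤ)))
      = Set.range (fun k : coprimeIndex p => fourierVec (fourierRoot p) p k.toNat) := by
  have hω := isPrimitiveRoot_fourierRoot (NeZero.ne p)
  ext v
  constructor <;> rintro ⟨k, rfl⟩ <;> obtain ⟨m, hm⟩ := k.exists_dvd_add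
  · exact ⟨m, hω.fourierVec_eq_of_dvd_sub (by rwa [sub_neg_eq_add, add_comm])⟩
  · exact ⟨m, hω.fourierVec_eq_of_dvd_sub (by rwa [← neg_add', dvd_neg, add_comm])⟩

end Ramanujan

/-- The column space of `B_p` equals the span of the `φ(p)` Fourier columns
`(1, ω_p^k, …, ω_p^{(p-1)k})ᵀ` over all `1 ≤ k ≤ p` with `gcd(k,p)=1`,
`ω_p = e^{-2πi/p}`. -/
theorem ramanujanMatrix_columnSpace (p : ℕ) (hp : 0 < p) :
    Submodule.span ℂ (Set.range (ramanujanMatrix p).transpose)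
      = Submodule.span ℂ (Set.range fun k : coprimeIndex p =>
          fun i : Fin p => (fourierCoprimeMatrix p) i k) := by
  have : NeZero p := ⟨hp.ne'⟩
  have hκ : ∀ k m : coprimeIndex p, (p : ℤ) ∣ -(k.toNat : ℤ) - -(m.toNat : ℤ) → k = m :=
    fun k m h => (coprimeIndex.ext_of_dvd_sub (by rwa [neg_sub_neg] at h)).symm
  rw [ramanujanMatrix_eq_fourierSumMatrix,
    span_range_fourierSumMatrix_transpose (isPrimitiveRoot_fourierRoot hp.ne') _ hκ,
    range_fourierVec_neg_coprimeIndex]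
  congr 2
  exact funext fun k => (fourierCoprimeMatrix_col_eq_fourierVec k).symm
end

section
/- (Asymptotic orthogonality of Ramanujan subspaces) Let p \ne q be positive integers, and let x(n) be any sequence lying in the column space of the periodic extension of the Ramanujan basis of period p, and y(n) a sequence in the Ramanujan subspace of period q (i.e., x and y are linear combinations, with fixed coefficients, of shifted Ramanujan sums c_p(n-s) and c_q(n-t) respectively). Then (1/N) \sum_{n=0}^{N-1} x(n) y(n) \to 0 as N \to \infty. -/
open Filter Finset Complex

section Cesaro

variable {𝕜 : Type*} [RCLike 𝕜]

theorem tendsto_cesaro_pow_of_norm_le_one {z : 𝕜} (hz : ‖z‖ ≤ 1) (hz1 : z ≠ 1) :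
    Tendsto (fun N : ℕ => (N : 𝕜)⁻¹ * ∑ n ∈ range N, z ^ n) atTop (nhds 0) := by
  have hbound : ∀ N : ℕ, ‖(N : 𝕜)⁻¹ * ∑ n ∈ range N, z ^ n‖ ≤ 2 / ‖z - 1‖ / N := by
    intro N
    have hzN : ‖z ^ N - 1‖ ≤ 2 := by
      calc ‖z ^ N - 1‖ ≤ ‖z‖ ^ N + 1 := by simpa [norm_pow] using norm_sub_le (z ^ N) 1
        _ ≤ 2 := by linarith [pow_le_one₀ (norm_nonneg z) hz (n := N)]
    rw [norm_mul, geom_sum_eq hz1, norm_div, norm_inv, RCLike.norm_natCast, inv_mul_eq_div]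
    gcongr
  exact squeeze_zero_norm hbound (tendsto_const_div_atTop_nhds_zero_nat _)

theorem tendsto_cesaro_sum_mul_pow {ι : Type*} {s : Finset ι} {c z : ι → 𝕜} {f : ℕ → 𝕜}
    (hf : ∀ n, f n = ∑ i ∈ s, c i * z i ^ n) (hz : ∀ i ∈ s, ‖z i‖ ≤ 1)
    (hz1 : ∀ i ∈ s, z i ≠ 1) :
    Tendsto (fun N : ℕ => (N : 𝕜)⁻¹ * ∑ n ∈ range N, f n) atTop (nhds 0) := by
  have hmean : ∀ N : ℕ, (N : 𝕜)⁻¹ * ∑ n ∈ range N, f n =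
      ∑ i ∈ s, c i * ((N : 𝕜)⁻¹ * ∑ n ∈ range N, z i ^ n) := by
    intro N
    simp only [hf, mul_sum]
    rw [sum_comm]
    exact sum_congr rfl fun i _ => sum_congr rfl fun n _ => by ring
  simp only [hmean]
  simpa using tendsto_finsetSum s fun i hi =>
    (tendsto_cesaro_pow_of_norm_le_one (hz i hi) (hz1 i hi)).const_mul (c i)

end Cesaro

theorem sum_mul_pow_mul_sum_mul_pow {R ι κ : Type*} [CommSemiring R] (s : Finset ι)
    (t : Finset κ) (a u : ι → R) (b v : κ → R) (n : ℕ) :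
    (∑ i ∈ s, a i * u i ^ n) * (∑ j ∈ t, b j * v j ^ n) =
      ∑ ij ∈ s ×ˢ t, (a ij.1 * b ij.2) * (u ij.1 * v ij.2) ^ n := by
  rw [sum_mul_sum, sum_product]
  exact sum_congr rfl fun i _ => sum_congr rfl fun j _ => by ring

theorem IsPrimitiveRoot.mul_ne_one {M : Type*} [DivisionCommMonoid M] {ζ ξ : M} {k l : ℕ}
    (hζ : IsPrimitiveRoot ζ k) (hξ : IsPrimitiveRoot ξ l) (hkl : k ≠ l) : ζ * ξ ≠ 1 := by
  intro h
  rw [eq_inv_of_mul_eq_one_left h] at hζ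
  exact hkl (hζ.unique hξ.inv)

def coprimeResidues (p : ℕ) : Finset ℕ :=
  (Icc 1 p).filter (fun k => Nat.gcd k p = 1)

noncomputable def unitRoot (p k : ℕ) : ℂ :=
  exp (2 * Real.pi * I * (k / p))

theorem norm_unitRoot (p k : ℕ) : ‖unitRoot p k‖ = 1 := by
  simp [unitRoot, norm_exp]

theorem isPrimitiveRoot_unitRoot {p k : ℕ} (hk : k ∈ coprimeResidues p) :
    IsPrimitiveRoot (unitRoot p k) p := by
  rw [coprimeResidues, mem_filter, mem_Icc] at hk
  exact isPrimitiveRoot_exp_of_coprime k p (by omega) hk.2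

theorem ramanujanSum_eq_sum_zpow_s9 (p : ℕ) (m : ℤ) :
    ramanujanSum p m = ∑ k ∈ coprimeResidues p, unitRoot p k ^ m := by
  refine sum_congr rfl fun k _ => ?_
  rw [unitRoot, ← exp_int_mul]
  ring_nf

theorem sum_mul_ramanujanSum_sub (p r : ℕ) (a : ℕ → ℂ) (n : ℕ) :
    ∑ s ∈ range r, a s * ramanujanSum p (n - s) =
      ∑ sk ∈ range r ×ˢ coprimeResidues p,
        (a sk.1 * unitRoot p sk.2 ^ (-(sk.1 : ℤ))) * unitRoot p sk.2 ^ n := by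
  rw [sum_product]
  refine sum_congr rfl fun s _ => ?_
  rw [ramanujanSum_eq_sum_zpow_s9, mul_sum]
  refine sum_congr rfl fun k _ => ?_
  have hζ : unitRoot p k ≠ 0 := exp_ne_zero _
  rw [sub_eq_add_neg, zpow_add₀ hζ, zpow_natCast]
  ring

theorem ramanujan_subspaces_asymptotically_orthogonal_general
    (p q : ℕ) (hpq : p ≠ q)
    (a : ℕ → ℝ) (b : ℕ → ℝ)
    (x : ℤ → ℂ) (y : ℤ → ℂ)
    (hx : ∀ n : ℤ, x n = ∑ s ∈ Finset.range (Nat.totient p),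
        (a s : ℂ) * ramanujanSum p (n - s))
    (hy : ∀ n : ℤ, y n = ∑ t ∈ Finset.range (Nat.totient q),
        (b t : ℂ) * ramanujanSum q (n - t)) :
    Filter.Tendsto
      (fun N : ℕ => (N : ℂ)⁻¹ * ∑ n ∈ Finset.range N, x (n : ℤ) * y (n : ℤ))
      Filter.atTop (nhds 0) := by
  refine tendsto_cesaro_sum_mul_pow (fun n => by
    rw [hx, hy, sum_mul_ramanujanSum_sub, sum_mul_ramanujanSum_sub, sum_mul_pow_mul_sum_mul_pow])
    (fun w _ => ?_) (fun w hw => ?_)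
  · rw [norm_mul, norm_unitRoot, norm_unitRoot, one_mul]
  · simp only [mem_product] at hw
    exact (isPrimitiveRoot_unitRoot hw.1.2).mul_ne_one (isPrimitiveRoot_unitRoot hw.2.2) hpq

/-- Asymptotic orthogonality of Ramanujan subspaces: if `p ≠ q`,
`x(n) = ∑_{s=0}^{φ(p)-1} a_s c_p(n-s)` and `y(n) = ∑_{t=0}^{φ(q)-1} b_t c_q(n-t)`
with fixed coefficients, then `(1/N) ∑_{n=0}^{N-1} x(n) y(n) → 0` as `N → ∞`. -/
theorem ramanujan_subspaces_asymptotically_orthogonal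
    (p q : ℕ) (hp : 0 < p) (hq : 0 < q) (hpq : p ≠ q)
    (a : ℕ → ℝ) (b : ℕ → ℝ)
    (x : ℤ → ℂ) (y : ℤ → ℂ)
    (hx : ∀ n : ℤ, x n = ∑ s ∈ Finset.range (Nat.totient p),
        (a s : ℂ) * ramanujanSum p (n - s))
    (hy : ∀ n : ℤ, y n = ∑ t ∈ Finset.range (Nat.totient q),
        (b t : ℂ) * ramanujanSum q (n - t)) :
    Filter.Tendsto
      (fun N : ℕ => (N : ℂ)⁻¹ * ∑ n ∈ Finset.range N, x (n : ℤ) * y (n : ℤ))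
      Filter.atTop (nhds 0) :=
  ramanujan_subspaces_asymptotically_orthogonal_general p q hpq a b x y hx hy
end

section
/- Let B_S be an N \times n real matrix of full column rank, and suppose the smallest eigenvalue of B_S^T B_S is at least K > 0, and every entry of B_{S^c}^T B_S is bounded in absolute value by M, where B_{S^c} is an N \times m matrix. Then the maximum absolute row sum norm satisfies \| B_{S^c}^T B_S (B_S^T B_S)^{-1} \|_\infty \le n^2 M / K. -/
/-- Let `B_S` be an `N × n` real matrix of full column rank whose Gram matrix
`B_Sᵀ B_S` has smallest eigenvalue at least `K > 0`, and let `B_{Sᶜ}` be an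
`N × m` matrix with all entries of `B_{Sᶜ}ᵀ B_S` bounded in absolute value by `M`.
Then each absolute row sum of `B_{Sᶜ}ᵀ B_S (B_Sᵀ B_S)⁻¹` is at most `n² M / K`,
i.e. `‖B_{Sᶜ}ᵀ B_S (B_Sᵀ B_S)⁻¹‖_∞ ≤ n² M / K`. -/
theorem rowSumNorm_bound_cross_gram_inv
    {N n m : ℕ} (BS : Matrix (Fin N) (Fin n) ℝ) (BSc : Matrix (Fin N) (Fin m) ℝ)
    (K M : ℝ) (hK : 0 < K)
    (hrank : BS.rank = n)
    (heig : ∀ x : Fin n → ℝ,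
      K * ∑ i, x i ^ 2 ≤ ∑ i, (BS.transpose * BS).mulVec x i * x i)
    (hM : ∀ i j, |(BSc.transpose * BS) i j| ≤ M) :
    ∀ i : Fin m,
      ∑ j, |(BSc.transpose * BS * (BS.transpose * BS)⁻¹) i j| ≤ n ^ 2 * M / K := by
  intro i
  set A := BS.transpose * BS with hA
  -- A is invertible
  have hker : ∀ x : Fin n → ℝ, A.mulVec x = 0 → x = 0 := by
    intro x hx
    have := heig x
    rw [hx] at this
    simp only [Pi.zero_apply, zero_mul, Finset.sum_const_zero] at this
    have hs : ∑ i, x i ^ 2 ≤ 0 := by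
      by_contra h
      push_neg at h
      nlinarith
    have hs0 : ∑ i, x i ^ 2 = 0 :=
      le_antisymm hs (Finset.sum_nonneg fun _ _ => sq_nonneg _)
    funext j
    have := (Finset.sum_eq_zero_iff_of_nonneg (fun k _ => sq_nonneg (x k))).mp hs0
      j (Finset.mem_univ j)
    exact pow_eq_zero_iff (by norm_num) |>.mp this
  have hinj : Function.Injective A.mulVec := by
    change Function.Injective A.mulVecLin
    rw [← LinearMap.ker_eq_bot, LinearMap.ker_eq_bot']
    intro x hx
    exact hker x hx
  have hunit : IsUnit A := Matrix.mulVec_injective_iff_isUnit.mp hinj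
  have hAinv : A * A⁻¹ = 1 :=
    Matrix.mul_nonsing_inv A ((Matrix.isUnit_iff_isUnit_det A).mp hunit)
  -- entries of A⁻¹ bounded by 1/K
  have hinv_bound : ∀ k j : Fin n, |A⁻¹ k j| ≤ 1 / K := by
    intro k j
    set y : Fin n → ℝ := fun l => A⁻¹ l j with hy
    have hmul : ∀ l, A.mulVec y l = (1 : Matrix (Fin n) (Fin n) ℝ) l j := by
      intro l
      rw [← hAinv]
      simp [Matrix.mulVec, Matrix.mul_apply, dotProduct, hy]
    have h1 := heig y
    have hRHS : ∑ l, A.mulVec y l * y l = y j := by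
      simp [hmul, Matrix.one_apply, ite_mul]
    rw [hRHS] at h1
    set S := ∑ l, y l ^ 2 with hS
    have hyk : y k ^ 2 ≤ S := Finset.single_le_sum (fun l _ => sq_nonneg (y l))
      (Finset.mem_univ k)
    have hyj : y j ^ 2 ≤ S := Finset.single_le_sum (fun l _ => sq_nonneg (y l))
      (Finset.mem_univ j)
    have hS0 : 0 ≤ S := Finset.sum_nonneg fun l _ => sq_nonneg _
    have hKS : K ^ 2 * S ≤ 1 := by
      rcases eq_or_lt_of_le hS0 with h0 | h0
      · rw [← h0]; norm_num
      · have hsq : (K * S) * (K * S) ≤ y j * y j :=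
          mul_self_le_mul_self (by positivity) h1
        nlinarith [hsq, hyj, h0]
    have hySle : (K * y k) ^ 2 ≤ 1 := by nlinarith [hyk, hKS, sq_nonneg K]
    have habs : |K * y k| ≤ 1 := by
      rw [abs_le]
      constructor <;> nlinarith [hySle]
    rw [abs_mul, abs_of_pos hK] at habs
    show |y k| ≤ 1 / K
    rw [le_div_iff₀ hK]
    linarith [habs]
  -- M nonneg if n > 0 handled; do main bound
  calc ∑ j, |(BSc.transpose * BS * A⁻¹) i j|
      ≤ ∑ j : Fin n, ∑ k : Fin n, M * (1 / K) := by
        apply Finset.sum_le_sum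
        intro j _
        rw [Matrix.mul_apply]
        refine (Finset.abs_sum_le_sum_abs _ _).trans ?_
        apply Finset.sum_le_sum
        intro k _
        rw [abs_mul]
        exact mul_le_mul (hM i k) (hinv_bound k j) (abs_nonneg _)
          ((abs_nonneg _).trans (hM i k))
    _ = n ^ 2 * M / K := by
        simp [Finset.sum_const]
        ring
end
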